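/- arXiv:2009.05161 — 3 statements merged into one kernel-verified Lean document; each statement's English description precedes it below -/
import Mathlib

section
/- The minimum-spanning-tree heuristic is consistent: for any vertex u, neighbor-reachable vertex v with shortest-path distance d(u,v) in G, and finite goal set U containing v, the minimum cost of a tree covering {u} ∪ U is at most d(u,v) plus the minimum cost of a tree covering {v} ∪ (U \ {v}). -/
open SimpleGraph

/-- A cycle cannot pass through a vertex whose neighbor is unique. -/
lemma no_cycle_of_unique_nbr {X : Type*} {Gx : SimpleGraph X} {x : X}
    (hw : ∀ y z, Gx.Adj x y → Gx.Adj x z → y = z) (c : Gx.Walk x x) : ¬ c.IsCycle := by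
  intro hc
  cases c with
  | nil => exact hc.not_of_nil
  | cons h q =>
    rename_i y
    rw [Walk.cons_isCycle_iff] at hc
    apply hc.2
    have hne : x ≠ y := Gx.ne_of_adj h
    obtain ⟨z, h', q', hq⟩ := Walk.exists_eq_cons_of_ne hne q.reverse
    have hzy : z = y := hw _ _ h' h
    have hmem : s(x, z) ∈ q.reverse.edges := by rw [hq]; simp
    rw [hzy] at hmem
    rwa [Walk.edges_reverse, List.mem_reverse] at hmem

/-- The homomorphism from the coercion of a subgraph to its spanning coercion. -/
def coeToSpanningHom {V : Type*} {G : SimpleGraph V} (H : G.Subgraph) :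
    H.coe →g H.spanningCoe where
  toFun := Subtype.val
  map_rel' := fun h => h

/-- A walk in the spanning coercion whose endpoints are vertices of the subgraph
lifts to `H.coe`. -/
def walkOfSpanning {V : Type*} {G : SimpleGraph V} {H : G.Subgraph} :
    ∀ {a b : V} (p : H.spanningCoe.Walk a b) (ha : a ∈ H.verts) (hb : b ∈ H.verts),
      H.coe.Walk ⟨a, ha⟩ ⟨b, hb⟩
  | _, _, .nil, _, _ => .nil
  | _, _, .cons h p, ha, hb =>
    .cons (show H.coe.Adj ⟨_, ha⟩ ⟨_, H.edge_vert h.symm⟩ from h)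
      (walkOfSpanning p (H.edge_vert h.symm) hb)

lemma walkOfSpanning_map {V : Type*} {G : SimpleGraph V} {H : G.Subgraph} :
    ∀ {a b : V} (p : H.spanningCoe.Walk a b) (ha : a ∈ H.verts) (hb : b ∈ H.verts),
      (walkOfSpanning p ha hb).map (coeToSpanningHom H) = p
  | _, _, .nil, _, _ => rfl
  | _, _, .cons h p, ha, hb => by
    simp only [walkOfSpanning, Walk.map_cons, walkOfSpanning_map]
    rfl

lemma spanning_acyclic_of_coe {V : Type*} {G : SimpleGraph V} {H : G.Subgraph}
    (h : H.coe.IsAcyclic) : H.spanningCoe.IsAcyclic := by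
  intro x c hc
  have hx : x ∈ H.verts := by
    cases c with
    | nil => exact (hc.not_of_nil).elim
    | cons h' q => exact H.edge_vert h'
  have heq := walkOfSpanning_map c hx hx
  rw [← heq] at hc
  replace hc := (Walk.map_isCycle_iff_of_injective (f := coeToSpanningHom H) Subtype.val_injective).mp hc
  exact h _ hc

lemma coe_acyclic_of_spanning {V : Type*} {G : SimpleGraph V} {H : G.Subgraph}
    (h : H.spanningCoe.IsAcyclic) : H.coe.IsAcyclic := by
  intro x c hc
  exact h _ (hc.map (f := coeToSpanningHom H) Subtype.val_injective)

/-- Attaching a pendant edge to an acyclic subgraph keeps it acyclic. -/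
lemma leaf_acyclic {V : Type*} {G : SimpleGraph V} {T : G.Subgraph}
    (hT : T.spanningCoe.IsAcyclic) {u w : V} (h : G.Adj u w) (hu : u ∉ T.verts) :
    (G.subgraphOfAdj h ⊔ T).spanningCoe.IsAcyclic := by
  classical
  intro x c hc
  have huniq : ∀ y, (G.subgraphOfAdj h ⊔ T).spanningCoe.Adj u y → y = w := by
    intro y hy
    rcases hy with hy | hy
    · exact (Sym2.congr_right.mp hy).symm
    · exact absurd (T.edge_vert hy) hu
  by_cases hx : u ∈ c.support
  · exact no_cycle_of_unique_nbr
      (fun y z hy hz => (huniq y hy).trans (huniq z hz).symm) (c.rotate u hx) (hc.rotate hx)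
  · have hedges : ∀ e ∈ c.edges, e ∈ T.spanningCoe.edgeSet := by
      intro e he
      induction e with
      | h a b =>
        have hab : (G.subgraphOfAdj h ⊔ T).spanningCoe.Adj a b := Walk.adj_of_mem_edges c he
        have ha : a ≠ u := fun hh => hx (hh ▸ Walk.fst_mem_support_of_mem_edges c he)
        have hb : b ≠ u := fun hh => hx (hh ▸ Walk.snd_mem_support_of_mem_edges c he)
        rcases hab with hab | hab
        · exfalso
          have hmem : u ∈ s(a, b) := hab ▸ Sym2.mem_mk_left u w
          rcases Sym2.mem_iff.mp hmem with h1 | h1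
          · exact ha h1.symm
          · exact hb h1.symm
        · exact hab
    exact hT _ (hc.transfer hedges)

/-- Growing a "tree" subgraph along a walk. -/
lemma extend_tree_along_walk {V : Type*} {G : SimpleGraph V} {u v : V} (p : G.Walk u v) :
    ∀ T : G.Subgraph, T.Connected → T.spanningCoe.IsAcyclic → v ∈ T.verts →
      ∃ T' : G.Subgraph, T'.Connected ∧ T'.spanningCoe.IsAcyclic ∧ u ∈ T'.verts ∧
        T ≤ T' ∧ T'.edgeSet ⊆ T.edgeSet ∪ {e | e ∈ p.edges} := by
  classical
  induction p with
  | nil =>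
    intro T hc ha hv
    exact ⟨T, hc, ha, hv, le_rfl, fun e he => Or.inl he⟩
  | cons h q ih =>
    intro T hc ha hv
    obtain ⟨T₁, c₁, a₁, hx₁, le₁, he₁⟩ := ih T hc ha hv
    rename_i a b w
    have hq_sub : ∀ e : Sym2 V, e ∈ q.edges → e ∈ (Walk.cons h q).edges := by
      intro e he; simp [he]
    by_cases hu : a ∈ T₁.verts
    · refine ⟨T₁, c₁, a₁, hu, le₁, fun e he => ?_⟩
      rcases he₁ he with h' | h'
      · exact Or.inl h'
      · exact Or.inr (hq_sub e h')
    · refine ⟨G.subgraphOfAdj h ⊔ T₁, ?_, leaf_acyclic a₁ h hu, ?_,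
        le₁.trans le_sup_right, ?_⟩
      · exact Subgraph.connected_sup (Subgraph.subgraphOfAdj_connected h).preconnected c₁.preconnected ⟨b, by simp, hx₁⟩
      · left; simp
      · intro e he
        rw [Subgraph.edgeSet_sup] at he
        rcases he with he | he
        · rw [G.edgeSet_subgraphOfAdj] at he
          refine Or.inr ?_
          show e ∈ (Walk.cons h q).edges
          simp only [Walk.edges_cons, List.mem_cons]
          exact Or.inl he
        · rcases he₁ he with h' | h'
          · exact Or.inl h'
          · exact Or.inr (hq_sub e h')

/-- In a connected graph, there is a finite tree subgraph through any finite vertex set. -/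
lemma exists_tree_subgraph {V : Type*} [DecidableEq V] {G : SimpleGraph V} (hG : G.Connected)
    (v : V) (s : Finset V) :
    ∃ T : G.Subgraph, T.Connected ∧ T.spanningCoe.IsAcyclic ∧ v ∈ T.verts ∧
      ↑s ⊆ T.verts ∧ T.edgeSet.Finite := by
  classical
  induction s using Finset.induction with
  | empty =>
    refine ⟨G.singletonSubgraph v, Subgraph.singletonSubgraph_connected, ?_, rfl, by simp, ?_⟩
    · intro x c hc
      cases c with
      | nil => exact hc.not_of_nil
      | cons h' q => simp [SimpleGraph.singletonSubgraph_adj] at h'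
    · rw [G.edgeSet_singletonSubgraph]; exact Set.finite_empty
  | @insert a s ha ih =>
    obtain ⟨T, hc, hac, hvT, hsT, hfin⟩ := ih
    obtain ⟨p, -⟩ := (hG a v).exists_walk_length_eq_dist
    obtain ⟨T', hc', hac', haT', hle, hsub⟩ := extend_tree_along_walk p T hc hac hvT
    refine ⟨T', hc', hac', hle.1 hvT, ?_, ?_⟩
    · intro x hx
      rcases Finset.mem_insert.mp hx with rfl | hx
      · exact haT'
      · exact hle.1 (hsT hx)
    · exact (hfin.union (p.edges.toFinset.finite_toSet.subset
        (by intro e he; simpa using he))).subset hsub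

/-- Minimum number of edges of a subtree of `G` whose vertex set contains `S`. -/
noncomputable def mstCost {V : Type*} (G : SimpleGraph V) (S : Set V) : ℕ :=
  sInf {m : ℕ | ∃ H : G.Subgraph, H.coe.IsTree ∧ S ⊆ H.verts ∧ H.edgeSet.ncard ≤ m}

/-- consistency of the MST heuristic:
`mst(u,U) ≤ d(u,v) + mst(v, U \ {v})` for any `v ∈ U`. -/
theorem stmt_3 {V : Type*} [DecidableEq V] (G : SimpleGraph V) (hG : G.Connected)
    (u v : V) (U : Finset V) (hv : v ∈ U) :
    mstCost G (insert u ↑U) ≤ G.dist u v + mstCost G (insert v ↑(U.erase v)) := by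
  classical
  have hne : {m : ℕ | ∃ H : G.Subgraph, H.coe.IsTree ∧
      (insert v ↑(U.erase v) : Set V) ⊆ H.verts ∧ H.edgeSet.ncard ≤ m}.Nonempty := by
    obtain ⟨T, hc, hac, hvT, hsT, hfin⟩ := exists_tree_subgraph hG v (U.erase v)
    exact ⟨T.edgeSet.ncard, T, ⟨hc.coe, coe_acyclic_of_spanning hac⟩,
      Set.insert_subset hvT hsT, le_rfl⟩
  obtain ⟨H, hHtree, hHsub, hHcard⟩ := Nat.sInf_mem hne
  obtain ⟨p, hp⟩ := (hG u v).exists_walk_length_eq_dist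
  have hvH : v ∈ H.verts := hHsub (Set.mem_insert v _)
  obtain ⟨T', hc', hac', huT', hle, hsub⟩ :=
    extend_tree_along_walk p H ⟨hHtree.isConnected⟩ (spanning_acyclic_of_coe hHtree.IsAcyclic) hvH
  have hcard : T'.edgeSet.ncard ≤ G.dist u v + mstCost G (insert v ↑(U.erase v)) := by
    by_cases hf : H.edgeSet.Finite
    · have hpe : {e : Sym2 V | e ∈ p.edges}.Finite :=
        p.edges.toFinset.finite_toSet.subset (by intro e he; simpa using he)
      calc T'.edgeSet.ncard ≤ (H.edgeSet ∪ {e | e ∈ p.edges}).ncard :=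
            Set.ncard_le_ncard hsub (hf.union hpe)
        _ ≤ H.edgeSet.ncard + {e : Sym2 V | e ∈ p.edges}.ncard := Set.ncard_union_le _ _
        _ ≤ mstCost G (insert v ↑(U.erase v)) + G.dist u v := by
            refine add_le_add hHcard ?_
            have hset : {e : Sym2 V | e ∈ p.edges} = ↑p.edges.toFinset := by ext e; simp
            rw [hset, Set.ncard_coe_finset]
            calc p.edges.toFinset.card ≤ p.edges.length := p.edges.toFinset_card_le
              _ = p.length := p.length_edges
              _ = G.dist u v := hp
        _ = G.dist u v + mstCost G (insert v ↑(U.erase v)) := Nat.add_comm _ _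
    · have hinf : T'.edgeSet.Infinite :=
        fun hfin => hf (hfin.subset (Subgraph.edgeSet_mono hle))
      rw [hinf.ncard]
      exact Nat.zero_le _
  refine Nat.sInf_le ⟨T', ⟨hc'.coe, coe_acyclic_of_spanning hac'⟩, ?_, hcard⟩
  refine Set.insert_subset huT' ?_
  intro x hx
  rcases eq_or_ne x v with rfl | hxv
  · exact hle.1 hvH
  · exact hle.1 (hHsub (Set.mem_insert_of_mem _ (by simpa [Finset.mem_erase, hxv] using hx)))
end

section
/- Soundness of the Hamiltonian MDD: let p : {0,...,t_M} → V be a trajectory (with moves along edges or waits) starting at s that visits every vertex of the goal set g by time t_M, where every move after all goals are visited is a wait (cost accounting). Then for every time step t and v = p(t), there exists a walk from s of length at most t_M that visits both v and all vertices of g; in particular d(s,v) ≤ t. -/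
open SimpleGraph

private lemma walk_exists {V : Type*} (G : SimpleGraph V) (s : V)
    (p : ℕ → V) (h0 : p 0 = s)
    (hstep : ∀ t : ℕ, p (t + 1) = p t ∨ G.Adj (p t) (p (t + 1))) :
    ∀ n : ℕ, ∃ W : G.Walk s (p n), W.length ≤ n ∧ ∀ i ≤ n, p i ∈ W.support := by
  intro n
  induction n with
  | zero =>
    refine ⟨(SimpleGraph.Walk.nil : G.Walk (p 0) (p 0)).copy h0 rfl, by simp, ?_⟩
    intro i hi
    interval_cases i
    simp
  | succ n ih =>
    obtain ⟨W, hlen, hsup⟩ := ih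
    rcases hstep n with h | h
    · refine ⟨W.copy rfl h.symm, by simp; omega, ?_⟩
      intro i hi
      simp only [SimpleGraph.Walk.support_copy]
      rcases Nat.lt_succ_iff_lt_or_eq.mp (Nat.lt_succ_of_le hi) with h' | h'
      · exact hsup i (Nat.lt_succ_iff.mp h')
      · subst h'; rw [h]; exact hsup n le_rfl
    · refine ⟨W.concat h, by simp; omega, ?_⟩
      intro i hi
      rw [SimpleGraph.Walk.support_concat, List.mem_append]
      rcases Nat.lt_succ_iff_lt_or_eq.mp (Nat.lt_succ_of_le hi) with h' | h'
      · exact Or.inl (hsup i (Nat.lt_succ_iff.mp h'))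
      · subst h'; simp

/-- soundness of the Hamiltonian MDD: for a trajectory from `s`
visiting all goals in `g` by time `tM` (waiting after `tM`), for every time `t`
and `v = p t`, there is a walk from `s` of length ≤ `tM` visiting `v` and all of
`g`; in particular `d(s,v) ≤ t`. -/
theorem stmt_7 {V : Type*} (G : SimpleGraph V) (s : V) (g : Finset V) (tM : ℕ)
    (p : ℕ → V) (h0 : p 0 = s)
    (hstep : ∀ t : ℕ, p (t + 1) = p t ∨ G.Adj (p t) (p (t + 1)))
    (hvisit : ∀ w ∈ g, ∃ t ≤ tM, p t = w)
    (hwait : ∀ t : ℕ, tM ≤ t → p (t + 1) = p t) (t : ℕ) :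
    (∃ (w : V) (W : G.Walk s w), W.length ≤ tM ∧ p t ∈ W.support ∧
      ∀ x ∈ g, x ∈ W.support) ∧
    G.dist s (p t) ≤ t := by
  have hstable : ∀ u, tM ≤ u → p u = p tM := by
    intro u hu
    induction u with
    | zero => have : tM = 0 := by omega
              rw [this]
    | succ u ih =>
      rcases Nat.lt_or_ge tM (u+1) with h | h
      · rw [hwait u (by omega), ih (by omega)]
      · have : tM = u + 1 := by omega
        rw [this]
  obtain ⟨W, hlen, hsup⟩ := walk_exists G s p h0 hstep tM
  have hpt : p t ∈ W.support := by
    rcases le_or_gt t tM with h | h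
    · exact hsup t h
    · rw [hstable t (by omega)]; exact hsup tM le_rfl
  constructor
  · exact ⟨p tM, W, hlen, hpt, fun x hx => by
      obtain ⟨u, hu, hpu⟩ := hvisit x hx
      exact hpu ▸ hsup u hu⟩
  · rcases le_or_gt t tM with h | h
    · obtain ⟨W', hlen', _⟩ := walk_exists G s p h0 hstep t
      exact le_trans (SimpleGraph.dist_le W') hlen'
    · rw [hstable t (by omega)]
      exact le_trans (le_trans (SimpleGraph.dist_le W) hlen) (by omega)
end

section
/- Soundness of the spanning-tree MDD relaxation: under the hypotheses of the Hamiltonian MDD soundness statement, for every t ≤ t_M and v = p(t), there exists a subtree of G of at most t_M edges whose vertex set contains {s, v} ∪ g. -/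
open SimpleGraph

/-- Deleting a non-bridge edge preserves reachability. -/
private lemma reach_del {V : Type*} {G : SimpleGraph V} {v w : V}
    (hvw : (G.deleteEdges {s(v, w)}).Reachable v w) {a b : V} (h : G.Reachable a b) :
    (G.deleteEdges {s(v, w)}).Reachable a b := by
  obtain ⟨p⟩ := h
  induction p with
  | nil => exact Reachable.refl _
  | @cons a c b hac q ih =>
    refine Reachable.trans ?_ ih
    by_cases he : s(a, c) = s(v, w)
    · rw [Sym2.eq_iff] at he
      rcases he with ⟨rfl, rfl⟩ | ⟨rfl, rfl⟩
      · exact hvw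
      · exact hvw.symm
    · exact ⟨Walk.cons (by simp [hac, he]) Walk.nil⟩

/-- Spanning tree existence for connected graphs with finitely many edges. -/
private lemma exists_tree_le {α : Type*} :
    ∀ (n : ℕ) (G' : SimpleGraph α), G'.Connected → ∀ (hfin : G'.edgeSet.Finite),
      hfin.toFinset.card ≤ n → ∃ T : SimpleGraph α, T ≤ G' ∧ T.IsTree := by
  intro n
  induction n with
  | zero =>
    intro G' hc hfin hcard
    refine ⟨G', le_refl _, hc, ?_⟩
    have hempty : G'.edgeSet = ∅ := by
      have := Finset.card_eq_zero.mp (Nat.le_zero.mp hcard)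
      simpa [Set.Finite.toFinset_eq_empty] using this
    intro v c hcyc
    rcases c with _ | ⟨h, c⟩
    · exact hcyc.not_of_nil
    · have hmem : s(v, _) ∈ G'.edgeSet := h
      rw [hempty] at hmem
      exact hmem.elim
  | succ n ih =>
    intro G' hc hfin hcard
    by_cases hac : G'.IsAcyclic
    · exact ⟨G', le_refl _, hc, hac⟩
    · rw [isAcyclic_iff_forall_adj_isBridge] at hac
      push_neg at hac
      obtain ⟨v, w, hvw, hnb⟩ := hac
      rw [isBridge_iff] at hnb
      push_neg at hnb
      have hreach : (G'.deleteEdges {s(v, w)}).Reachable v w := by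
        simpa [SimpleGraph.deleteEdges] using hnb
      have hconn : (G'.deleteEdges {s(v, w)}).Connected :=
        (connected_iff _).mpr
          ⟨fun a b => reach_del hreach (hc.preconnected a b), hc.nonempty⟩
      have hfin' : (G'.deleteEdges {s(v, w)}).edgeSet.Finite := by
        rw [edgeSet_deleteEdges]
        exact hfin.diff
      have hss : hfin'.toFinset ⊂ hfin.toFinset := by
        rw [Set.Finite.toFinset_ssubset_toFinset]
        constructor
        · rw [edgeSet_deleteEdges]; exact Set.diff_subset
        · intro hsub
          have hmem : s(v, w) ∈ (G'.deleteEdges {s(v, w)}).edgeSet := hsub hvw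
          rw [edgeSet_deleteEdges] at hmem
          simp at hmem
      have hcard' : hfin'.toFinset.card ≤ n := by
        have := Finset.card_lt_card hss
        omega
      obtain ⟨T, hT, hTtree⟩ := ih _ hconn hfin' hcard'
      exact ⟨T, hT.trans (deleteEdges_le _), hTtree⟩

/-- soundness of the spanning-tree MDD relaxation: under the
hypotheses of Hamiltonian MDD soundness, for every `t ≤ tM` there is a subtree
of `G` with at most `tM` edges covering `{s, p t} ∪ g`. -/
theorem stmt_8 {V : Type*} (G : SimpleGraph V) (s : V) (g : Finset V) (tM : ℕ)
    (p : ℕ → V) (h0 : p 0 = s)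
    (hstep : ∀ t : ℕ, p (t + 1) = p t ∨ G.Adj (p t) (p (t + 1)))
    (hvisit : ∀ w ∈ g, ∃ t ≤ tM, p t = w)
    (hwait : ∀ t : ℕ, tM ≤ t → p (t + 1) = p t)
    (t : ℕ) (ht : t ≤ tM) :
    ∃ H : G.Subgraph, H.coe.IsTree ∧ insert s (insert (p t) ↑g) ⊆ H.verts ∧
      H.edgeSet.ncard ≤ tM := by
  classical
  -- Step 1: build a walk from `s` covering all vertices visited up to time `tM`.
  have key : ∀ n : ℕ, ∃ w : G.Walk s (p n), w.length ≤ n ∧ ∀ i ≤ n, p i ∈ w.support := by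
    intro n
    induction n with
    | zero =>
      refine ⟨(Walk.nil : G.Walk s s).copy rfl h0.symm, by simp, ?_⟩
      intro i hi
      interval_cases i
      simp [h0]
    | succ n ihn =>
      obtain ⟨w, hl, hsup⟩ := ihn
      rcases hstep n with heq | hadj
      · refine ⟨w.copy rfl heq.symm, by simpa using hl.trans (Nat.le_succ n), ?_⟩
        intro i hi
        rcases Nat.lt_succ_iff_lt_or_eq.mp (Nat.lt_succ_of_le hi) with h' | rfl
        · simpa using hsup i (Nat.lt_succ_iff.mp h')
        · simpa [heq] using hsup n le_rfl
      · refine ⟨w.concat hadj, ?_, ?_⟩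
        · rw [Walk.length_concat]; omega
        · intro i hi
          rcases Nat.lt_succ_iff_lt_or_eq.mp (Nat.lt_succ_of_le hi) with h' | rfl
          · rw [Walk.support_concat]
            simp only [List.concat_eq_append, List.mem_append]; exact Or.inl (hsup i (Nat.lt_succ_iff.mp h'))
          · rw [Walk.support_concat]
            simp
  obtain ⟨w, hl, hsup⟩ := key tM
  set H₀ := w.toSubgraph with hH₀
  have hH₀conn : H₀.coe.Connected := w.toSubgraph_connected
  have hH₀edge : H₀.edgeSet = {e | e ∈ w.edges} := w.edgeSet_toSubgraph
  have hH₀fin : H₀.edgeSet.Finite := by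
    rw [hH₀edge]; exact List.finite_toSet _
  have hH₀card : H₀.edgeSet.ncard ≤ tM := by
    have h1 : H₀.edgeSet = ↑w.edges.toFinset := by
      rw [hH₀edge]; ext e; simp
    rw [h1, Set.ncard_coe_finset]
    have h2 := List.toFinset_card_le w.edges
    have h3 := Walk.length_edges w
    omega
  -- Step 2: the coe edge set is finite too.
  have hinj : Function.Injective (Sym2.map (Subtype.val : H₀.verts → V)) :=
    Sym2.map.injective Subtype.val_injective
  have hcoefin : H₀.coe.edgeSet.Finite := by
    refine Set.Finite.of_finite_image (f := Sym2.map Subtype.val) ?_ hinj.injOn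
    refine hH₀fin.subset ?_
    rintro e ⟨e', he', rfl⟩
    induction e' with
    | _ a b =>
      have : H₀.Adj ↑a ↑b := he'
      simpa using this
  -- Step 3: extract a spanning tree of the coe graph.
  obtain ⟨T, hTle, hTtree⟩ :=
    exists_tree_le hcoefin.toFinset.card H₀.coe hH₀conn hcoefin le_rfl
  -- Step 4: transfer `T` back to a subgraph of `G`.
  let Hs : G.Subgraph :=
    { verts := H₀.verts
      Adj := fun a b => ∃ (ha : a ∈ H₀.verts) (hb : b ∈ H₀.verts), T.Adj ⟨a, ha⟩ ⟨b, hb⟩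
      adj_sub := by
        rintro a b ⟨ha, hb, hT⟩
        exact H₀.adj_sub (hTle hT)
      edge_vert := by rintro a b ⟨ha, hb, hT⟩; exact ha
      symm := ⟨by rintro a b ⟨ha, hb, hT⟩; exact ⟨hb, ha, hT.symm⟩⟩ }
  have hverts : Hs.verts = H₀.verts := rfl
  have hEq : Hs.coe = T := by
    ext ⟨a, ha⟩ ⟨b, hb⟩
    constructor
    · rintro ⟨ha', hb', h⟩
      convert h using 2
    · intro h
      exact ⟨ha, hb, h⟩
  have hsle : Hs ≤ H₀ := by
    constructor
    · rw [hverts]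
    · rintro a b ⟨ha, hb, hT⟩
      exact hTle hT
  refine ⟨Hs, ?_, ?_, ?_⟩
  · rw [hEq]; exact hTtree
  · intro x hx
    simp only [Set.mem_insert_iff, Finset.coe_insert, Set.mem_insert_iff,
      Finset.mem_coe] at hx
    show x ∈ H₀.verts
    rw [hH₀, Walk.mem_verts_toSubgraph]
    rcases hx with rfl | rfl | hxg
    · have := hsup 0 (Nat.zero_le _)
      rwa [h0] at this
    · exact hsup t ht
    · obtain ⟨t', ht', hpt'⟩ := hvisit x hxg
      rw [← hpt']; exact hsup t' ht'
  · calc Hs.edgeSet.ncard ≤ H₀.edgeSet.ncard :=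
          Set.ncard_le_ncard (Subgraph.edgeSet_mono hsle) hH₀fin
      _ ≤ tM := hH₀card
end
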